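/- Variance of the X-process: there is a universal constant c > 0 such that for every f ∈ F, Var[X(f)] ≤ c · ‖f − g_f‖_μ², and consequently (since ‖f − g_f‖_μ ≤ 2‖f − Tf‖_μ and (1−β)‖f − Tf‖_μ² ≤ E[X(f)]), if β < 1 then Var[X(f)] ≤ (c'/(1−β)) · E[X(f)] for a universal constant c'; moreover if F is convex then Var[X(f)] ≤ c'' · E[X(f)] for a universal constant c''. -/

import Mathlib

open MeasureTheory ProbabilityTheory
open scoped ENNReal NNReal

noncomputable section

/-- Expected value of `f (s, ·)` under the policy kernel at state `s`: `f(s,π)`. -/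
def polExp {S A : Type*} [MeasurableSpace S] [MeasurableSpace A]
    (pol : Kernel S A) (f : S × A → ℝ) (s : S) : ℝ :=
  ∫ a, f (s, a) ∂(pol s)

/-- The Bellman evaluation operator `(Tf)(s,a) = r(s,a) + γ E_{s' ∼ P(·|s,a)} f(s',π)`. -/
def bellmanOp {S A : Type*} [MeasurableSpace S] [MeasurableSpace A]
    (γ : ℝ) (rew : S × A → ℝ) (P : Kernel (S × A) S) (pol : Kernel S A)
    (f : S × A → ℝ) : S × A → ℝ :=
  fun sa => rew sa + γ * ∫ s', polExp pol f s' ∂(P sa)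

/-- Squared `L²(μ)` norm: `‖h‖_μ² = E_μ h²`. -/
def l2sq {X : Type*} [MeasurableSpace X] (μ : Measure X) (h : X → ℝ) : ℝ :=
  ∫ x, (h x) ^ 2 ∂μ

/-- `L²(μ)` norm `‖h‖_μ`. -/
def l2 {X : Type*} [MeasurableSpace X] (μ : Measure X) (h : X → ℝ) : ℝ :=
  Real.sqrt (l2sq μ h)

/-- Distance in `L²(μ)` from `h` to the class `F`: `inf_{g ∈ F} ‖g − h‖_μ`. -/
def projDist {S A : Type*} [MeasurableSpace S] [MeasurableSpace A]
    (μ : Measure (S × A)) (F : Set ((S × A) → ℝ)) (h : (S × A) → ℝ) : ℝ :=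
  sInf ((fun g => l2 μ (fun x => g x - h x)) '' F)

/-- Bellman error `‖f − Tf‖_μ`. -/
def bellErr {S A : Type*} [MeasurableSpace S] [MeasurableSpace A]
    (γ : ℝ) (rew : S × A → ℝ) (P : Kernel (S × A) S) (pol : Kernel S A)
    (μ : Measure (S × A)) (f : (S × A) → ℝ) : ℝ :=
  l2 μ (fun x => f x - bellmanOp γ rew P pol f x)

/-- The localized class `F(r) = {f ∈ F : ‖f − Tf‖_μ ≤ r}`. -/
def Floc {S A : Type*} [MeasurableSpace S] [MeasurableSpace A]
    (γ : ℝ) (rew : S × A → ℝ) (P : Kernel (S × A) S) (pol : Kernel S A)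
    (μ : Measure (S × A)) (F : Set ((S × A) → ℝ)) (r : ℝ) : Set ((S × A) → ℝ) :=
  {f ∈ F | bellErr γ rew P pol μ f ≤ r}

/-- The incompleteness function `I(r) = sup_{f ∈ F(r)} inf_{g ∈ F} ‖g − Tf‖_μ`. -/
def Iloc {S A : Type*} [MeasurableSpace S] [MeasurableSpace A]
    (γ : ℝ) (rew : S × A → ℝ) (P : Kernel (S × A) S) (pol : Kernel S A)
    (μ : Measure (S × A)) (F : Set ((S × A) → ℝ)) (r : ℝ) : ℝ :=
  sSup ((fun f => projDist μ F (bellmanOp γ rew P pol f)) '' Floc γ rew P pol μ F r)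

/-- The incompleteness factor
`β = sup_{f ∈ F, ‖f−Tf‖_μ > 0} inf_{g ∈ F} ‖g − Tf‖_μ / ‖f − Tf‖_μ`. -/
def betaFac {S A : Type*} [MeasurableSpace S] [MeasurableSpace A]
    (γ : ℝ) (rew : S × A → ℝ) (P : Kernel (S × A) S) (pol : Kernel S A)
    (μ : Measure (S × A)) (F : Set ((S × A) → ℝ)) : ℝ :=
  sSup ((fun f => projDist μ F (bellmanOp γ rew P pol f) / bellErr γ rew P pol μ f) ''
    {f ∈ F | 0 < bellErr γ rew P pol μ f})

/-- The population minimax loss `M(f) = ‖f − Tf‖_μ² − inf_{g ∈ F} ‖g − Tf‖_μ²`. -/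
def minimaxLoss {S A : Type*} [MeasurableSpace S] [MeasurableSpace A]
    (γ : ℝ) (rew : S × A → ℝ) (P : Kernel (S × A) S) (pol : Kernel S A)
    (μ : Measure (S × A)) (F : Set ((S × A) → ℝ)) (f : (S × A) → ℝ) : ℝ :=
  l2sq μ (fun x => f x - bellmanOp γ rew P pol f x) -
    sInf ((fun g => l2sq μ (fun x => g x - bellmanOp γ rew P pol f x)) '' F)

/-- One step of the state-action chain: transition by `P` then act by `pol`. -/
def stepMeas {S A : Type*} [MeasurableSpace S] [MeasurableSpace A]
    (P : Kernel (S × A) S) (pol : Kernel S A) (sa : S × A) : Measure (S × A) :=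
  (P sa).bind (fun s' => (pol s').map (fun a' => (s', a')))

/-- The law `P_h` of `(S_h, A_h)` when following `pol` from the state `s0`. -/
def stepLaw {S A : Type*} [MeasurableSpace S] [MeasurableSpace A]
    (P : Kernel (S × A) S) (pol : Kernel S A) (s0 : S) : ℕ → Measure (S × A)
  | 0 => (pol s0).map (fun a => (s0, a))
  | (h + 1) => (stepLaw P pol s0 h).bind (stepMeas P pol)

/-- The discounted occupancy measure `d^π = (1−γ) Σ_{h≥0} γ^h P_h`. -/
def occMeas {S A : Type*} [MeasurableSpace S] [MeasurableSpace A]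
    (γ : ℝ) (P : Kernel (S × A) S) (pol : Kernel S A) (s0 : S) : Measure (S × A) :=
  ENNReal.ofReal (1 - γ) •
    Measure.sum (fun h : ℕ => ENNReal.ofReal γ ^ h • stepLaw P pol s0 h)

/-- The prediction error `E(f) = (f* − f)(s₀, π)`. -/
def predErr {S A : Type*} [MeasurableSpace S] [MeasurableSpace A]
    (pol : Kernel S A) (fstar f : S × A → ℝ) (s0 : S) : ℝ :=
  polExp pol (fun x => fstar x - f x) s0

/-- The concentrability coefficient `C = sup_{f ∈ F} ‖f − Tf‖_π² / ‖f − Tf‖_μ²`. -/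
def concCoef {S A : Type*} [MeasurableSpace S] [MeasurableSpace A]
    (γ : ℝ) (rew : S × A → ℝ) (P : Kernel (S × A) S) (pol : Kernel S A)
    (μ dpi : Measure (S × A)) (F : Set ((S × A) → ℝ)) : ℝ :=
  sSup ((fun f => l2sq dpi (fun x => f x - bellmanOp γ rew P pol f x) /
      l2sq μ (fun x => f x - bellmanOp γ rew P pol f x)) '' F)

/-- The law of a data tuple `(s, a, R, s')` with `(s,a) ∼ μ`, `R ∼ RL(s,a)`,
`s' ∼ P(·|s,a)`. -/
def tupleLaw {S A : Type*} [MeasurableSpace S] [MeasurableSpace A]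
    (μ : Measure (S × A)) (RL : Kernel (S × A) ℝ) (P : Kernel (S × A) S) :
    Measure ((S × A) × ℝ × S) :=
  μ.bind (fun sa => ((RL sa).prod (P sa)).map (fun rs => (sa, rs)))

/-- The squared TD cost `C(g,f) = (g(s,a) − R − γ f(s',π))²` of a tuple. -/
def tdCost {S A : Type*} [MeasurableSpace S] [MeasurableSpace A]
    (γ : ℝ) (pol : Kernel S A) (g f : S × A → ℝ) (t : (S × A) × ℝ × S) : ℝ :=
  (g t.1 - t.2.1 - γ * polExp pol f t.2.2) ^ 2

/-- The empirical loss `L̂(g,f)`: the average of the squared TD cost over the dataset. -/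
def empLoss {S A : Type*} [MeasurableSpace S] [MeasurableSpace A]
    (γ : ℝ) (pol : Kernel S A) {n : ℕ} (D : Fin n → (S × A) × ℝ × S)
    (g f : S × A → ℝ) : ℝ :=
  (∑ i, tdCost γ pol g f (D i)) / n

/-- The empirical minimax objective `M̂(f) = L̂(f,f) − inf_{g ∈ F} L̂(g,f)`. -/
def empMinimax {S A : Type*} [MeasurableSpace S] [MeasurableSpace A]
    (γ : ℝ) (pol : Kernel S A) (F : Set ((S × A) → ℝ)) {n : ℕ}
    (D : Fin n → (S × A) × ℝ × S) (f : S × A → ℝ) : ℝ :=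
  empLoss γ pol D f f - sInf ((fun g => empLoss γ pol D g f) '' F)

/-- `f̂` is an empirical minimizer of `M̂` over `F`. -/
def IsEmpMinimizer {S A : Type*} [MeasurableSpace S] [MeasurableSpace A]
    (γ : ℝ) (pol : Kernel S A) (F : Set ((S × A) → ℝ)) {n : ℕ}
    (D : Fin n → (S × A) × ℝ × S) (fhat : S × A → ℝ) : Prop :=
  fhat ∈ F ∧ ∀ f ∈ F, empMinimax γ pol F D fhat ≤ empMinimax γ pol F D f

/-- The law of a single Rademacher sign: `±1` with probability `1/2` each. -/
def signMeas : Measure ℝ :=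
  (2⁻¹ : ℝ≥0∞) • Measure.dirac (1 : ℝ) + (2⁻¹ : ℝ≥0∞) • Measure.dirac (-1 : ℝ)

/-- Rademacher complexity of a class `H` with `n` covariates drawn i.i.d. from `ξ`:
`R_n[H] = E sup_{h ∈ H} |(1/n) Σ_i ε_i h(x_i)|`. -/
def radComp {X : Type*} [MeasurableSpace X] (ξ : Measure X) (n : ℕ)
    (H : Set (X → ℝ)) : ℝ :=
  ∫ p, sSup ((fun h => |(∑ i, p.2 i * h (p.1 i)) / n|) '' H)
    ∂((Measure.pi (fun _ : Fin n => ξ)).prod (Measure.pi (fun _ : Fin n => signMeas)))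

/-- The `X`-process `X(f) = C(f,f) − C(g_f, f)` as a function of the data tuple. -/
def Xproc {S A : Type*} [MeasurableSpace S] [MeasurableSpace A]
    (γ : ℝ) (pol : Kernel S A) (gf : ((S × A) → ℝ) → (S × A) → ℝ)
    (f : S × A → ℝ) : (S × A) × ℝ × S → ℝ :=
  fun t => tdCost γ pol f f t - tdCost γ pol (gf f) f t

/-- The `Y`-process `Y(g) = C(f*,f*) − C(g, f*)` as a function of the data tuple. -/
def Yproc {S A : Type*} [MeasurableSpace S] [MeasurableSpace A]
    (γ : ℝ) (pol : Kernel S A) (fstar g : S × A → ℝ) : (S × A) × ℝ × S → ℝ :=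
  fun t => tdCost γ pol fstar fstar t - tdCost γ pol g fstar t

end

/-!
Writing `Y = R + γ f(s', π)` for the TD target, `X(f) = (f − g_f)(s,a) · (f + g_f − 2Y)` and the
second factor is bounded by `6`, so `Var X(f) ≤ E X(f)² ≤ 36 ‖f − g_f‖²`. Since the conditional
mean of `Y` given `(s,a)` is `Tf(s,a)`, `E X(f) = ‖f − Tf‖² − ‖g_f − Tf‖²`. If `β < 1`, then
`‖g_f − Tf‖ ≤ β ‖f − Tf‖` and `‖f − g_f‖² ≤ 2‖f − Tf‖² + 2‖g_f − Tf‖² ≤ 4‖f − Tf‖²` give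
`Var X(f) ≤ 144 ‖f − Tf‖² ≤ 144/(1 − β) · E X(f)`. If `F` is convex, the nearest point `g_f`
satisfies `‖g_f − Tf‖² + ‖f − g_f‖² ≤ ‖f − Tf‖²`, that is `‖f − g_f‖² ≤ E X(f)`.
-/

lemma nonneg_of_forall_mem_Ioc_quadratic_nonneg {b c : ℝ}
    (h : ∀ t ∈ Set.Ioc (0 : ℝ) 1, 0 ≤ 2 * t * b + t ^ 2 * c) : 0 ≤ b := by
  have hlim : Filter.Tendsto (fun t : ℝ => 2 * b + t * c) (nhdsWithin 0 (Set.Ioi 0))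
      (nhds (2 * b)) := by
    refine ((by fun_prop : Continuous fun t : ℝ => 2 * b + t * c).tendsto' 0 _ ?_).mono_left
      nhdsWithin_le_nhds
    simp
  have hev : ∀ᶠ t in nhdsWithin (0 : ℝ) (Set.Ioi 0), 0 ≤ 2 * b + t * c := by
    filter_upwards [Ioc_mem_nhdsGT one_pos] with t ht
    exact nonneg_of_mul_nonneg_right (by linarith [h t ht]) ht.1
  linarith [ge_of_tendsto hlim hev]

section L2

variable {X : Type*} [MeasurableSpace X] {μ : Measure X}

lemma l2sq_nonneg (h : X → ℝ) : 0 ≤ l2sq μ h :=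
  integral_nonneg fun _ => sq_nonneg _

lemma l2_le_l2_iff {h h' : X → ℝ} : l2 μ h ≤ l2 μ h' ↔ l2sq μ h ≤ l2sq μ h' :=
  Real.sqrt_le_sqrt_iff (l2sq_nonneg h')

lemma l2sq_add_mul {p q : X → ℝ} (hp : MemLp p 2 μ) (hq : MemLp q 2 μ) (t : ℝ) :
    l2sq μ (fun x => p x + t * q x) =
      l2sq μ p + 2 * t * ∫ x, p x * q x ∂μ + t ^ 2 * l2sq μ q := by
  have hpq : Integrable (fun x => p x * q x) μ := hp.integrable_mul hq
  calc l2sq μ (fun x => p x + t * q x)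
      = ∫ x, (p x ^ 2 + 2 * t * (p x * q x)) + t ^ 2 * q x ^ 2 ∂μ :=
        integral_congr_ae (ae_of_all _ fun x => by ring)
    _ = l2sq μ p + 2 * t * ∫ x, p x * q x ∂μ + t ^ 2 * l2sq μ q := by
      rw [integral_add (f := fun x => p x ^ 2 + 2 * t * (p x * q x))
          (hp.integrable_sq.add (hpq.const_mul _)) (hq.integrable_sq.const_mul _),
        integral_add hp.integrable_sq (hpq.const_mul _), integral_const_mul,
        integral_const_mul, l2sq, l2sq]

lemma l2sq_sub_le_two_mul_add {f g h : X → ℝ} (hf : MemLp (fun x => f x - h x) 2 μ)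
    (hg : MemLp (fun x => g x - h x) 2 μ) :
    l2sq μ (fun x => f x - g x) ≤
      2 * l2sq μ (fun x => f x - h x) + 2 * l2sq μ (fun x => g x - h x) := by
  have hfg : MemLp (fun x => f x - g x) 2 μ := by
    convert hf.sub hg using 1
    ext x
    simp only [Pi.sub_apply]
    ring
  rw [l2sq, l2sq, l2sq, ← integral_const_mul, ← integral_const_mul,
    ← integral_add (hf.integrable_sq.const_mul _) (hg.integrable_sq.const_mul _)]
  refine integral_mono hfg.integrable_sq
    ((hf.integrable_sq.const_mul _).add (hg.integrable_sq.const_mul _)) fun x => ?_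
  nlinarith [sq_nonneg (f x + g x - 2 * h x)]

/-- The obtuse-angle inequality for a nearest point `g` of a convex set. -/
lemma l2sq_add_l2sq_le_of_convex {F : Set (X → ℝ)} (hF : Convex ℝ F)
    (hF2 : ∀ f ∈ F, MemLp f 2 μ) {h g f : X → ℝ} (hh : MemLp h 2 μ) (hg : g ∈ F)
    (hmin : ∀ g' ∈ F, l2sq μ (fun x => g x - h x) ≤ l2sq μ (fun x => g' x - h x))
    (hf : f ∈ F) :
    l2sq μ (fun x => g x - h x) + l2sq μ (fun x => f x - g x) ≤
      l2sq μ (fun x => f x - h x) := by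
  have hgh : MemLp (fun x => g x - h x) 2 μ := (hF2 g hg).sub hh
  have hfg : MemLp (fun x => f x - g x) 2 μ := (hF2 f hf).sub (hF2 g hg)
  have hexp (t : ℝ) : l2sq μ (fun x => (g x + t * (f x - g x)) - h x) =
      l2sq μ (fun x => g x - h x) + 2 * t * ∫ x, (g x - h x) * (f x - g x) ∂μ +
        t ^ 2 * l2sq μ (fun x => f x - g x) := by
    rw [← l2sq_add_mul hgh hfg t]
    congr 1
    ext x
    ring
  have hinner : 0 ≤ ∫ x, (g x - h x) * (f x - g x) ∂μ := by
    refine nonneg_of_forall_mem_Ioc_quadratic_nonneg (c := l2sq μ (fun x => f x - g x))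
      fun t ht => ?_
    have hmem : (fun x => g x + t * (f x - g x)) ∈ F := by
      convert hF hg hf (by linarith [ht.2] : 0 ≤ 1 - t) ht.1.le (by ring) using 1
      ext x
      simp only [Pi.add_apply, Pi.smul_apply, smul_eq_mul]
      ring
    linarith [hmin _ hmem, hexp t]
  have hf1 : l2sq μ (fun x => f x - h x) = l2sq μ (fun x => (g x + 1 * (f x - g x)) - h x) := by
    congr 1
    ext x
    ring
  linarith [hexp 1]

end L2

lemma memLp_of_abs_le {X : Type*} [MeasurableSpace X] {μ : Measure X} [IsFiniteMeasure μ]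
    {h : X → ℝ} (hm : Measurable h) {C : ℝ} (hC : ∀ x, |h x| ≤ C) (p : ℝ≥0∞) : MemLp h p μ :=
  MemLp.of_bound hm.aestronglyMeasurable C
    (ae_of_all _ fun x => (Real.norm_eq_abs (h x)).trans_le (hC x))

lemma integrable_of_abs_le {X : Type*} [MeasurableSpace X] {μ : Measure X} [IsFiniteMeasure μ]
    {h : X → ℝ} (hm : Measurable h) {C : ℝ} (hC : ∀ x, |h x| ≤ C) : Integrable h μ :=
  memLp_one_iff_integrable.1 (memLp_of_abs_le hm hC 1)

lemma integrable_id_of_measure_compl_Icc_eq_zero {ν : Measure ℝ} [IsFiniteMeasure ν]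
    (hν : ν (Set.Icc (0 : ℝ) 1)ᶜ = 0) : Integrable (fun u : ℝ => u) ν := by
  refine Integrable.of_bound aestronglyMeasurable_id 1 ?_
  filter_upwards [ae_iff.2 hν] with u hu
  rw [Real.norm_eq_abs, abs_le]
  constructor <;> linarith [hu.1, hu.2]

lemma abs_integral_le_of_abs_le {X : Type*} [MeasurableSpace X] {μ : Measure X}
    [IsProbabilityMeasure μ] {h : X → ℝ} {C : ℝ} (hC : ∀ x, |h x| ≤ C) :
    |∫ x, h x ∂μ| ≤ C := by
  simpa using norm_integral_le_of_norm_le_const (μ := μ) (f := h)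
    (ae_of_all _ fun x => (Real.norm_eq_abs (h x)).trans_le (hC x))

lemma integral_sub_sq_sub_sub_sq {Ω : Type*} [MeasurableSpace Ω] {ν : Measure Ω}
    [IsProbabilityMeasure ν] {Y : Ω → ℝ} (hY : Integrable Y ν) (a b : ℝ) :
    ∫ ω, ((a - Y ω) ^ 2 - (b - Y ω) ^ 2) ∂ν =
      (a - ∫ ω, Y ω ∂ν) ^ 2 - (b - ∫ ω, Y ω ∂ν) ^ 2 := by
  calc ∫ ω, ((a - Y ω) ^ 2 - (b - Y ω) ^ 2) ∂ν
      = ∫ ω, (a ^ 2 - b ^ 2) - 2 * (a - b) * Y ω ∂ν :=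
        integral_congr_ae (ae_of_all _ fun ω => by ring)
    _ = (a - ∫ ω, Y ω ∂ν) ^ 2 - (b - ∫ ω, Y ω ∂ν) ^ 2 := by
      rw [integral_sub (integrable_const _) (hY.const_mul _), integral_const_mul,
        integral_const, probReal_univ, one_smul]
      ring

lemma integral_comp_fst_compProd {α β : Type*} [MeasurableSpace α] [MeasurableSpace β]
    (μ : Measure α) [SFinite μ] (κ : Kernel α β) [IsMarkovKernel κ] {φ : α → ℝ}
    (hφ : AEStronglyMeasurable φ μ) :
    ∫ x, φ x.1 ∂(μ ⊗ₘ κ) = ∫ a, φ a ∂μ := by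
  have hfst : (μ ⊗ₘ κ).map Prod.fst = μ := Measure.fst_compProd μ κ
  rw [← hfst] at hφ
  rw [← integral_map measurable_fst.aemeasurable hφ, hfst]

lemma sq_sub_sq_sub_sq_le {a b y : ℝ} (ha : |a| ≤ 1) (hb : |b| ≤ 1) (hy : |y| ≤ 2) :
    ((a - y) ^ 2 - (b - y) ^ 2) ^ 2 ≤ 36 * (a - b) ^ 2 := by
  have hc : (a + b - 2 * y) ^ 2 ≤ 6 ^ 2 := by
    apply sq_le_sq'
    · linarith [neg_abs_le a, neg_abs_le b, le_abs_self y]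
    · linarith [le_abs_self a, le_abs_self b, neg_abs_le y]
  calc ((a - y) ^ 2 - (b - y) ^ 2) ^ 2 = (a - b) ^ 2 * (a + b - 2 * y) ^ 2 := by ring
    _ ≤ (a - b) ^ 2 * 6 ^ 2 := by gcongr
    _ = 36 * (a - b) ^ 2 := by ring

section MDP

variable {S A : Type*} [MeasurableSpace S] [MeasurableSpace A]

lemma measurable_polExp (pol : Kernel S A) [IsSFiniteKernel pol] {f : S × A → ℝ}
    (hf : Measurable f) : Measurable (polExp pol f) :=
  (hf.stronglyMeasurable.integral_kernel_prod_right' (κ := pol)).measurable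

lemma abs_polExp_le (pol : Kernel S A) [IsMarkovKernel pol] {f : S × A → ℝ}
    (hf : ∀ x, |f x| ≤ 1) (s : S) : |polExp pol f s| ≤ 1 :=
  abs_integral_le_of_abs_le fun a => hf (s, a)

lemma measurable_bellmanOp (γ : ℝ) {rew : S × A → ℝ} (hrew : Measurable rew)
    (P : Kernel (S × A) S) [IsSFiniteKernel P] (pol : Kernel S A) [IsSFiniteKernel pol]
    {f : S × A → ℝ} (hf : Measurable f) : Measurable (bellmanOp γ rew P pol f) :=
  hrew.add (measurable_const.mul ((measurable_polExp pol hf).comp measurable_snd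
    |>.stronglyMeasurable.integral_kernel_prod_right' (κ := P)).measurable)

lemma abs_bellmanOp_le {γ : ℝ} (hγ : |γ| ≤ 1) {rew : S × A → ℝ}
    (hrew : ∀ x, rew x ∈ Set.Icc (0 : ℝ) 1) (P : Kernel (S × A) S) [IsMarkovKernel P]
    (pol : Kernel S A) [IsMarkovKernel pol] {f : S × A → ℝ} (hf : ∀ x, |f x| ≤ 1)
    (x : S × A) : |bellmanOp γ rew P pol f x| ≤ 2 := by
  have hE : |∫ s', polExp pol f s' ∂(P x)| ≤ 1 :=
    abs_integral_le_of_abs_le (abs_polExp_le pol hf)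
  have hγE : |γ * ∫ s', polExp pol f s' ∂(P x)| ≤ 1 := by
    rw [abs_mul]
    nlinarith [abs_nonneg γ, abs_nonneg (∫ s', polExp pol f s' ∂(P x))]
  have hr : |rew x| ≤ 1 := abs_le.2 ⟨by linarith [(hrew x).1], (hrew x).2⟩
  exact (abs_add_le _ _).trans (by linarith)

/-- The TD target `R + γ f(s', π)` computed from the reward and next state of a tuple. -/
noncomputable def tdTarget (γ : ℝ) (pol : Kernel S A) (f : S × A → ℝ) (rs : ℝ × S) : ℝ :=
  rs.1 + γ * polExp pol f rs.2

lemma Xproc_eq (γ : ℝ) (pol : Kernel S A) (gf : ((S × A) → ℝ) → (S × A) → ℝ)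
    (f : S × A → ℝ) (t : (S × A) × ℝ × S) :
    Xproc γ pol gf f t =
      (f t.1 - tdTarget γ pol f t.2) ^ 2 - (gf f t.1 - tdTarget γ pol f t.2) ^ 2 := by
  simp only [Xproc, tdCost, tdTarget]
  ring

lemma tupleLaw_eq_compProd (μ : Measure (S × A)) [SFinite μ] (RL : Kernel (S × A) ℝ)
    [IsSFiniteKernel RL] (P : Kernel (S × A) S) [IsSFiniteKernel P] :
    tupleLaw μ RL P = μ ⊗ₘ (RL ×ₖ P) := by
  have hfun : (fun sa : S × A => ((RL sa).prod (P sa)).map (fun rs : ℝ × S => (sa, rs)))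
      = ⇑(Kernel.id ×ₖ (RL ×ₖ P)) := by
    funext sa
    rw [Kernel.prod_apply, Kernel.id_apply, Kernel.prod_apply, Measure.dirac_prod]
  ext s hs
  rw [tupleLaw, hfun, Measure.bind_apply hs (Kernel.measurable _).aemeasurable,
    Measure.compProd_apply hs]
  refine lintegral_congr fun sa => ?_
  rw [Kernel.prod_apply, Kernel.id_apply, Kernel.prod_apply, Measure.dirac_prod,
    Measure.map_apply measurable_prodMk_left hs]

instance isProbabilityMeasure_tupleLaw (μ : Measure (S × A)) [IsProbabilityMeasure μ]
    (RL : Kernel (S × A) ℝ) [IsMarkovKernel RL] (P : Kernel (S × A) S) [IsMarkovKernel P] :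
    IsProbabilityMeasure (tupleLaw μ RL P) := by
  rw [tupleLaw_eq_compProd]
  infer_instance

lemma ae_reward_mem_Icc (μ : Measure (S × A)) [SFinite μ] {RL : Kernel (S × A) ℝ}
    [IsSFiniteKernel RL] (hRL : ∀ x, (RL x) (Set.Icc (0 : ℝ) 1)ᶜ = 0)
    (P : Kernel (S × A) S) [IsSFiniteKernel P] :
    ∀ᵐ t ∂(tupleLaw μ RL P), t.2.1 ∈ Set.Icc (0 : ℝ) 1 := by
  rw [tupleLaw_eq_compProd]
  refine Measure.ae_compProd_of_ae_ae (measurable_fst.comp measurable_snd measurableSet_Icc)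
    (ae_of_all _ fun x => ?_)
  rw [Kernel.prod_apply]
  exact Measure.quasiMeasurePreserving_fst.ae (ae_iff.2 (hRL x))

lemma measurable_tdTarget (γ : ℝ) (pol : Kernel S A) [IsSFiniteKernel pol] {f : S × A → ℝ}
    (hf : Measurable f) : Measurable (tdTarget γ pol f) :=
  measurable_fst.add (measurable_const.mul ((measurable_polExp pol hf).comp measurable_snd))

lemma abs_tdTarget_le {γ : ℝ} (hγ : |γ| ≤ 1) (pol : Kernel S A) [IsMarkovKernel pol]
    {f : S × A → ℝ} (hf : ∀ x, |f x| ≤ 1) {rs : ℝ × S} (hr : rs.1 ∈ Set.Icc (0 : ℝ) 1) :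
    |tdTarget γ pol f rs| ≤ 2 := by
  have hγE : |γ * polExp pol f rs.2| ≤ 1 := by
    rw [abs_mul]
    nlinarith [abs_nonneg γ, abs_nonneg (polExp pol f rs.2), abs_polExp_le pol hf rs.2]
  have hr' : |rs.1| ≤ 1 := abs_le.2 ⟨by linarith [hr.1], hr.2⟩
  exact (abs_add_le _ _).trans (by linarith)

lemma integrable_tdTarget (γ : ℝ) (pol : Kernel S A) [IsMarkovKernel pol] {f : S × A → ℝ}
    (hf : Measurable f) (hfb : ∀ x, |f x| ≤ 1) {ν : Measure ℝ} [IsFiniteMeasure ν]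
    (hν : ν (Set.Icc (0 : ℝ) 1)ᶜ = 0) (ρ : Measure S) [IsFiniteMeasure ρ] :
    Integrable (tdTarget γ pol f) (ν.prod ρ) :=
  ((integrable_id_of_measure_compl_Icc_eq_zero hν).comp_fst ρ).add
    (((integrable_of_abs_le (measurable_polExp pol hf) (abs_polExp_le pol hfb)).comp_snd
      ν).const_mul γ)

lemma integral_tdTarget (γ : ℝ) (pol : Kernel S A) [IsMarkovKernel pol] {f : S × A → ℝ}
    (hf : Measurable f) (hfb : ∀ x, |f x| ≤ 1) {rew : S × A → ℝ} {RL : Kernel (S × A) ℝ}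
    [IsMarkovKernel RL] (hRL : ∀ x, (RL x) (Set.Icc (0 : ℝ) 1)ᶜ = 0)
    (hmean : ∀ x, ∫ u, u ∂(RL x) = rew x) (P : Kernel (S × A) S) [IsMarkovKernel P]
    (x : S × A) :
    ∫ rs, tdTarget γ pol f rs ∂((RL x).prod (P x)) = bellmanOp γ rew P pol f x := by
  have hR := integrable_id_of_measure_compl_Icc_eq_zero (hRL x)
  have hpe := integrable_of_abs_le (μ := P x) (measurable_polExp pol hf) (abs_polExp_le pol hfb)
  unfold tdTarget
  rw [integral_add (hR.comp_fst (P x)) ((hpe.comp_snd (RL x)).const_mul γ), integral_const_mul,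
    integral_fun_fst (fun u : ℝ => u), integral_fun_snd (polExp pol f), hmean]
  simp [bellmanOp]

lemma measurable_Xproc (γ : ℝ) (pol : Kernel S A) [IsSFiniteKernel pol]
    {gf : ((S × A) → ℝ) → (S × A) → ℝ} {f : S × A → ℝ} (hf : Measurable f)
    (hg : Measurable (gf f)) : Measurable (Xproc γ pol gf f) := by
  have hY : Measurable fun t : (S × A) × ℝ × S => tdTarget γ pol f t.2 :=
    (measurable_tdTarget γ pol hf).comp measurable_snd
  rw [show Xproc γ pol gf f = _ from funext (Xproc_eq γ pol gf f)]
  exact (((hf.comp measurable_fst).sub hY).pow_const 2).sub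
    (((hg.comp measurable_fst).sub hY).pow_const 2)

lemma ae_sq_Xproc_le {γ : ℝ} (hγ : |γ| ≤ 1) (pol : Kernel S A) [IsMarkovKernel pol]
    (μ : Measure (S × A)) [SFinite μ] {RL : Kernel (S × A) ℝ} [IsSFiniteKernel RL]
    (hRL : ∀ x, (RL x) (Set.Icc (0 : ℝ) 1)ᶜ = 0) (P : Kernel (S × A) S) [IsSFiniteKernel P]
    {gf : ((S × A) → ℝ) → (S × A) → ℝ} {f : S × A → ℝ} (hfb : ∀ x, |f x| ≤ 1)
    (hgb : ∀ x, |gf f x| ≤ 1) :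
    ∀ᵐ t ∂(tupleLaw μ RL P), Xproc γ pol gf f t ^ 2 ≤ 36 * (f t.1 - gf f t.1) ^ 2 := by
  filter_upwards [ae_reward_mem_Icc μ hRL P] with t ht
  rw [Xproc_eq]
  exact sq_sub_sq_sub_sq_le (hfb _) (hgb _) (abs_tdTarget_le hγ pol hfb ht)

lemma integrable_Xproc {γ : ℝ} (hγ : |γ| ≤ 1) (pol : Kernel S A) [IsMarkovKernel pol]
    (μ : Measure (S × A)) [IsProbabilityMeasure μ] {RL : Kernel (S × A) ℝ} [IsMarkovKernel RL]
    (hRL : ∀ x, (RL x) (Set.Icc (0 : ℝ) 1)ᶜ = 0) (P : Kernel (S × A) S) [IsMarkovKernel P]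
    {gf : ((S × A) → ℝ) → (S × A) → ℝ} {f : S × A → ℝ} (hf : Measurable f)
    (hg : Measurable (gf f)) (hfb : ∀ x, |f x| ≤ 1) (hgb : ∀ x, |gf f x| ≤ 1) :
    Integrable (Xproc γ pol gf f) (tupleLaw μ RL P) := by
  refine Integrable.of_bound (measurable_Xproc γ pol hf hg).aestronglyMeasurable 12 ?_
  filter_upwards [ae_sq_Xproc_le hγ pol μ hRL P hfb hgb] with t ht
  rw [Real.norm_eq_abs]
  refine abs_le_of_sq_le_sq ?_ (by norm_num)
  nlinarith [abs_le.1 (hfb t.1), abs_le.1 (hgb t.1)]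

lemma variance_Xproc_le {γ : ℝ} (hγ : |γ| ≤ 1) (pol : Kernel S A) [IsMarkovKernel pol]
    (μ : Measure (S × A)) [IsProbabilityMeasure μ] {RL : Kernel (S × A) ℝ} [IsMarkovKernel RL]
    (hRL : ∀ x, (RL x) (Set.Icc (0 : ℝ) 1)ᶜ = 0) (P : Kernel (S × A) S) [IsMarkovKernel P]
    {gf : ((S × A) → ℝ) → (S × A) → ℝ} {f : S × A → ℝ} (hf : Measurable f)
    (hg : Measurable (gf f)) (hfb : ∀ x, |f x| ≤ 1) (hgb : ∀ x, |gf f x| ≤ 1) :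
    variance (Xproc γ pol gf f) (tupleLaw μ RL P) ≤ 36 * l2sq μ (fun x => f x - gf f x) := by
  have hD : Measurable fun x => 36 * (f x - gf f x) ^ 2 := by fun_prop
  have hDb (x : S × A) : |36 * (f x - gf f x) ^ 2| ≤ 144 := by
    rw [abs_of_nonneg (by positivity)]
    nlinarith [abs_le.1 (hfb x), abs_le.1 (hgb x)]
  calc variance (Xproc γ pol gf f) (tupleLaw μ RL P)
      ≤ ∫ t, Xproc γ pol gf f t ^ 2 ∂(tupleLaw μ RL P) :=
        variance_le_expectation_sq (measurable_Xproc γ pol hf hg).aestronglyMeasurable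
    _ ≤ ∫ t, 36 * (f t.1 - gf f t.1) ^ 2 ∂(tupleLaw μ RL P) :=
        integral_mono_of_nonneg (ae_of_all _ fun _ => sq_nonneg _)
          (integrable_of_abs_le (hD.comp measurable_fst) fun t => hDb t.1)
          (ae_sq_Xproc_le hγ pol μ hRL P hfb hgb)
    _ = 36 * l2sq μ (fun x => f x - gf f x) := by
      rw [tupleLaw_eq_compProd, integral_comp_fst_compProd μ _ hD.aestronglyMeasurable,
        integral_const_mul, l2sq]

lemma integral_Xproc {γ : ℝ} (hγ : |γ| ≤ 1) {rew : S × A → ℝ} (hrew : Measurable rew)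
    (hrew01 : ∀ x, rew x ∈ Set.Icc (0 : ℝ) 1) (pol : Kernel S A) [IsMarkovKernel pol]
    (μ : Measure (S × A)) [IsProbabilityMeasure μ] {RL : Kernel (S × A) ℝ} [IsMarkovKernel RL]
    (hRL : ∀ x, (RL x) (Set.Icc (0 : ℝ) 1)ᶜ = 0) (hmean : ∀ x, ∫ u, u ∂(RL x) = rew x)
    (P : Kernel (S × A) S) [IsMarkovKernel P]
    {gf : ((S × A) → ℝ) → (S × A) → ℝ} {f : S × A → ℝ} (hf : Measurable f)
    (hg : Measurable (gf f)) (hfb : ∀ x, |f x| ≤ 1) (hgb : ∀ x, |gf f x| ≤ 1) :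
    ∫ t, Xproc γ pol gf f t ∂(tupleLaw μ RL P) =
      l2sq μ (fun x => f x - bellmanOp γ rew P pol f x) -
        l2sq μ (fun x => gf f x - bellmanOp γ rew P pol f x) := by
  have hT := measurable_bellmanOp γ hrew P pol hf
  have hTb := abs_bellmanOp_le hγ hrew01 P pol hfb
  have hsq {h : S × A → ℝ} (hm : Measurable h) (hb : ∀ x, |h x| ≤ 1) :
      Integrable (fun x => (h x - bellmanOp γ rew P pol f x) ^ 2) μ :=
    (memLp_of_abs_le (hm.sub hT) (fun x => (abs_sub _ _).trans
      (add_le_add (hb x) (hTb x))) 2).integrable_sq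
  have hsection (x : S × A) : ∫ rs, Xproc γ pol gf f (x, rs) ∂((RL ×ₖ P) x) =
      (f x - bellmanOp γ rew P pol f x) ^ 2 - (gf f x - bellmanOp γ rew P pol f x) ^ 2 := by
    simp only [Xproc_eq, Kernel.prod_apply]
    rw [integral_sub_sq_sub_sub_sq (integrable_tdTarget γ pol hf hfb (hRL x) (P x)),
      integral_tdTarget γ pol hf hfb hRL hmean P x]
  have hXint := integrable_Xproc hγ pol μ hRL P hf hg hfb hgb
  rw [tupleLaw_eq_compProd] at hXint ⊢
  rw [Measure.integral_compProd hXint, integral_congr_ae (ae_of_all _ hsection),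
    integral_sub (hsq hf hfb) (hsq hg hgb), l2sq, l2sq]

end MDP

section Incompleteness

variable {S A : Type*} [MeasurableSpace S] [MeasurableSpace A] {μ : Measure (S × A)}
  {F : Set ((S × A) → ℝ)}

lemma projDist_le {h g : S × A → ℝ} (hg : g ∈ F) :
    projDist μ F h ≤ l2 μ (fun x => g x - h x) :=
  csInf_le ⟨0, by rintro _ ⟨_, _, rfl⟩; exact Real.sqrt_nonneg _⟩ ⟨g, hg, rfl⟩

lemma projDist_eq_of_forall_le {h g : S × A → ℝ} (hg : g ∈ F)
    (hmin : ∀ g' ∈ F, l2 μ (fun x => g x - h x) ≤ l2 μ (fun x => g' x - h x)) :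
    projDist μ F h = l2 μ (fun x => g x - h x) :=
  le_antisymm (projDist_le hg)
    (le_csInf ⟨_, g, hg, rfl⟩ (by rintro _ ⟨g', hg', rfl⟩; exact hmin g' hg'))

variable {γ : ℝ} {rew : S × A → ℝ} {P : Kernel (S × A) S} {pol : Kernel S A}

lemma projDist_div_bellErr_le_betaFac {f : S × A → ℝ} (hf : f ∈ F)
    (hpos : 0 < bellErr γ rew P pol μ f) :
    projDist μ F (bellmanOp γ rew P pol f) / bellErr γ rew P pol μ f ≤
      betaFac γ rew P pol μ F := by
  refine le_csSup ⟨1, ?_⟩ ⟨f, ⟨hf, hpos⟩, rfl⟩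
  rintro _ ⟨f', ⟨hf', hpos'⟩, rfl⟩
  exact (div_le_one hpos').2 (projDist_le hf')

lemma l2sq_sub_bellmanOp_le_betaFac_mul {f g : S × A → ℝ} (hf : f ∈ F) (hg : g ∈ F)
    (hmin : ∀ g' ∈ F, l2 μ (fun x => g x - bellmanOp γ rew P pol f x) ≤
      l2 μ (fun x => g' x - bellmanOp γ rew P pol f x)) :
    l2sq μ (fun x => g x - bellmanOp γ rew P pol f x) ≤
      betaFac γ rew P pol μ F * l2sq μ (fun x => f x - bellmanOp γ rew P pol f x) := by
  have hg0 : 0 ≤ l2 μ (fun x => g x - bellmanOp γ rew P pol f x) := Real.sqrt_nonneg _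
  have he0 : 0 ≤ bellErr γ rew P pol μ f := Real.sqrt_nonneg _
  have hgf : l2 μ (fun x => g x - bellmanOp γ rew P pol f x) ≤ bellErr γ rew P pol μ f :=
    hmin f hf
  have hβ : l2 μ (fun x => g x - bellmanOp γ rew P pol f x) ≤
      betaFac γ rew P pol μ F * bellErr γ rew P pol μ f := by
    rcases he0.eq_or_lt with h0 | hpos
    · rw [← h0, mul_zero]
      exact h0 ▸ hgf
    · refine (div_le_iff₀ hpos).1 ?_
      rw [← projDist_eq_of_forall_le hg hmin]
      exact projDist_div_bellErr_le_betaFac hf hpos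
  rw [← Real.mul_self_sqrt (l2sq_nonneg (fun x => g x - bellmanOp γ rew P pol f x)),
    ← Real.mul_self_sqrt (l2sq_nonneg (fun x => f x - bellmanOp γ rew P pol f x))]
  change l2 μ _ * l2 μ _ ≤ _ * (bellErr γ rew P pol μ f * bellErr γ rew P pol μ f)
  nlinarith

end Incompleteness

noncomputable section

/-- Variance of the `X`-process: there are universal constants
`c, c', c'' > 0` such that for every `f ∈ F`, `Var[X(f)] ≤ c·‖f − g_f‖_μ²`; if
`β < 1` then `Var[X(f)] ≤ (c'/(1−β))·E[X(f)]`; and if `F` is convex then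
`Var[X(f)] ≤ c''·E[X(f)]`. -/
theorem variance_of_X_process :
    ∃ c c' c'' : ℝ, 0 < c ∧ 0 < c' ∧ 0 < c'' ∧
      ∀ (S A : Type) [MeasurableSpace S] [MeasurableSpace A]
        (γ : ℝ), 0 ≤ γ → γ < 1 →
      ∀ (rew : S × A → ℝ), Measurable rew → (∀ x, rew x ∈ Set.Icc (0 : ℝ) 1) →
      ∀ (P : Kernel (S × A) S), IsMarkovKernel P →
      ∀ (pol : Kernel S A), IsMarkovKernel pol →
      ∀ (μ : Measure (S × A)), IsProbabilityMeasure μ →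
      -- the reward kernel, supported on `[0,1]` with conditional mean `rew`
      ∀ (RL : Kernel (S × A) ℝ), IsMarkovKernel RL →
        (∀ x, (RL x) (Set.Icc (0 : ℝ) 1)ᶜ = 0) →
        (∀ x, (∫ u, u ∂(RL x)) = rew x) →
      -- a class of measurable functions bounded by one
      ∀ (F : Set ((S × A) → ℝ)),
        (∀ f ∈ F, Measurable f) → (∀ f ∈ F, ∀ x, |f x| ≤ 1) →
      -- `g_f` is a minimizer over `F` of `g ↦ ‖g − Tf‖_μ`
      ∀ (gf : ((S × A) → ℝ) → (S × A) → ℝ),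
        (∀ f ∈ F, gf f ∈ F ∧ ∀ g ∈ F,
          l2 μ (fun x => gf f x - bellmanOp γ rew P pol f x) ≤
            l2 μ (fun x => g x - bellmanOp γ rew P pol f x)) →
      (∀ f ∈ F,
        variance (Xproc γ pol gf f) (tupleLaw μ RL P) ≤
          c * l2sq μ (fun x => f x - gf f x)) ∧
      (betaFac γ rew P pol μ F < 1 →
        ∀ f ∈ F,
          variance (Xproc γ pol gf f) (tupleLaw μ RL P) ≤
            (c' / (1 - betaFac γ rew P pol μ F)) *
              ∫ t, Xproc γ pol gf f t ∂(tupleLaw μ RL P)) ∧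
      (Convex ℝ F →
        ∀ f ∈ F,
          variance (Xproc γ pol gf f) (tupleLaw μ RL P) ≤
            c'' * ∫ t, Xproc γ pol gf f t ∂(tupleLaw μ RL P)) := by
  refine ⟨36, 144, 36, by norm_num, by norm_num, by norm_num, ?_⟩
  intro S A _ _ γ hγ0 hγ1 rew hrew hrew01 P _ pol _ μ _ RL _ hRL hmean F hFm hFb gf hgf
  have hγ : |γ| ≤ 1 := abs_le.2 ⟨by linarith, hγ1.le⟩
  have hL2 (f : S × A → ℝ) (hf : f ∈ F) : MemLp f 2 μ := memLp_of_abs_le (hFm f hf) (hFb f hf) 2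
  have hTL2 (f : S × A → ℝ) (hf : f ∈ F) : MemLp (bellmanOp γ rew P pol f) 2 μ :=
    memLp_of_abs_le (measurable_bellmanOp γ hrew P pol (hFm f hf))
      (abs_bellmanOp_le hγ hrew01 P pol (hFb f hf)) 2
  have hvar (f : S × A → ℝ) (hf : f ∈ F) := variance_Xproc_le hγ pol μ hRL P (hFm f hf)
    (hFm _ (hgf f hf).1) (hFb f hf) (hFb _ (hgf f hf).1)
  have hEX (f : S × A → ℝ) (hf : f ∈ F) := integral_Xproc hγ hrew hrew01 pol μ hRL hmean P
    (hFm f hf) (hFm _ (hgf f hf).1) (hFb f hf) (hFb _ (hgf f hf).1)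
  refine ⟨hvar, fun hβ f hf => ?_, fun hconv f hf => ?_⟩
  · obtain ⟨hg, hmin⟩ := hgf f hf
    have hfg := l2sq_sub_le_two_mul_add ((hL2 f hf).sub (hTL2 f hf)) ((hL2 _ hg).sub (hTL2 f hf))
    have hgT := l2_le_l2_iff.1 (hmin f hf)
    have hgTβ := l2sq_sub_bellmanOp_le_betaFac_mul hf hg hmin
    have h1β : 0 < 1 - betaFac γ rew P pol μ F := by linarith
    calc variance (Xproc γ pol gf f) (tupleLaw μ RL P)
        ≤ 144 * l2sq μ (fun x => f x - bellmanOp γ rew P pol f x) := by linarith [hvar f hf]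
      _ = 144 / (1 - betaFac γ rew P pol μ F) *
          ((1 - betaFac γ rew P pol μ F) * l2sq μ (fun x => f x - bellmanOp γ rew P pol f x)) := by
        field_simp
      _ ≤ _ := by
        rw [hEX f hf]
        gcongr
        linarith
  · obtain ⟨hg, hmin⟩ := hgf f hf
    have hproj := l2sq_add_l2sq_le_of_convex hconv hL2 (hTL2 f hf) hg
      (fun g' hg' => l2_le_l2_iff.1 (hmin g' hg')) hf
    rw [hEX f hf]
    linarith [hvar f hf]

end
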